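/- arXiv:1309.2200 — 4 statements merged into one kernel-verified Lean document; each statement's English description precedes it below -/
import Mathlib

section
/- Let n be divisible by 4 and let H be a 3-graph on n vertices with minimum vertex degree at least binom(n-1,2) - binom(3n/4,2) + 3n/8 + c(n), where c(n)=1 if 8 | n and c(n)=-1/2 otherwise. If S ⊆ V(H) spans no copy of C, then |S| ≤ 3n/4. -/
open Finset

/-- Fact 4.2: if `4 ∣ n` and `H` is a 3-graph on `n` vertices with minimum vertex degree
at least `binom(n-1,2) - binom(3n/4,2) + 3n/8 + c(n)` (with `c(n) = 1` if `8 ∣ n` and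
`c(n) = -1/2` otherwise), then every set `S` spanning no copy of `C` has `|S| ≤ 3n/4`. -/
theorem stmt6 {V : Type*} [Fintype V] [DecidableEq V] (E : Finset (Finset V))
    (hE3 : ∀ e ∈ E, e.card = 3) (h4 : 4 ∣ Fintype.card V)
    (hδ : ∀ v : V,
      (((Fintype.card V - 1).choose 2 : ℚ) - ((3 * Fintype.card V / 4).choose 2 : ℚ) +
        3 * (Fintype.card V : ℚ) / 8 + (if 8 ∣ Fintype.card V then 1 else -1/2)) ≤
      ((E.filter fun e => v ∈ e).card : ℚ))
    (S : Finset V)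
    (hS : ∀ e₁ ∈ E, ∀ e₂ ∈ E, e₁ ⊆ S → e₂ ⊆ S → e₁ ≠ e₂ → (e₁ ∪ e₂).card ≠ 4) :
    4 * S.card ≤ 3 * Fintype.card V := by
  by_contra hcon
  push_neg at hcon
  obtain ⟨k, hk⟩ := h4
  set n := Fintype.card V with hn
  set s := S.card with hs
  have hsn : s ≤ n := by simpa using S.card_le_univ
  have hk1 : 1 ≤ k := by omega
  have hs1 : 3 * k + 1 ≤ s := by omega
  have hm : 3 * n / 4 = 3 * k := by omega
  -- per-vertex bounds
  have key : ∀ v ∈ S,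
      (E.filter fun e => v ∈ e).card
        ≤ (n - 1).choose 2 - (s - 1).choose 2 + (E.filter fun e => v ∈ e ∧ e ⊆ S).card
      ∧ 2 * (E.filter fun e => v ∈ e ∧ e ⊆ S).card ≤ s - 1 := by
    intro v hv
    have hcard2 : ∀ e ∈ E, v ∈ e → (e.erase v).card = 2 := by
      intro e he hve
      rw [card_erase_of_mem hve, hE3 e he]
    have hsplit : (E.filter fun e => v ∈ e ∧ e ⊆ S).card
        + (E.filter fun e => v ∈ e ∧ ¬ e ⊆ S).card = (E.filter fun e => v ∈ e).card := by
      simpa [filter_filter] using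
        card_filter_add_card_filter_not
          (s := E.filter fun e => v ∈ e) (p := fun e => e ⊆ S)
    -- bound on Aout
    have hAoutB : (E.filter fun e => v ∈ e ∧ ¬ e ⊆ S).card
        ≤ (n - 1).choose 2 - (s - 1).choose 2 := by
      have himg : (E.filter fun e => v ∈ e ∧ ¬ e ⊆ S).image (fun e => e.erase v) ⊆
          ((univ.erase v).powersetCard 2) \ ((S.erase v).powersetCard 2) := by
        intro p hp
        simp only [mem_image] at hp
        obtain ⟨e, he, rfl⟩ := hp
        rw [mem_filter] at he
        obtain ⟨heE, hvine, hns⟩ := he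
        rw [mem_sdiff, mem_powersetCard, mem_powersetCard]
        refine ⟨⟨fun x hx => mem_erase.2 ⟨(mem_erase.1 hx).1, mem_univ x⟩,
          hcard2 e heE hvine⟩, fun hc => ?_⟩
        refine hns (fun x hx => ?_)
        by_cases hxv : x = v
        · subst hxv; exact hv
        · exact mem_of_mem_erase (hc.1 (mem_erase.2 ⟨hxv, hx⟩))
      have hinj : Set.InjOn (fun e : Finset V => e.erase v)
          ↑(E.filter fun e => v ∈ e ∧ ¬ e ⊆ S) := by
        intro e1 h1 e2 h2 hq
        rw [mem_coe, mem_filter] at h1 h2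
        have hv1 : v ∈ e1 := h1.2.1
        have hv2 : v ∈ e2 := h2.2.1
        have : insert v (e1.erase v) = insert v (e2.erase v) := by
          simpa using congrArg (insert v) hq
        rwa [insert_erase hv1, insert_erase hv2] at this
      calc (E.filter fun e => v ∈ e ∧ ¬ e ⊆ S).card
          = ((E.filter fun e => v ∈ e ∧ ¬ e ⊆ S).image (fun e => e.erase v)).card :=
            (card_image_of_injOn hinj).symm
        _ ≤ (((univ.erase v).powersetCard 2) \ ((S.erase v).powersetCard 2)).card :=
            card_le_card himg
        _ = (n - 1).choose 2 - (s - 1).choose 2 := by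
            rw [card_sdiff_of_subset (powersetCard_mono (erase_subset_erase v (subset_univ S))),
              card_powersetCard, card_powersetCard, card_erase_of_mem (mem_univ v),
              card_erase_of_mem hv, card_univ, ← hn, ← hs]
    -- bound on Ain
    have hdisj : ∀ e1 ∈ (E.filter fun e => v ∈ e ∧ e ⊆ S),
        ∀ e2 ∈ (E.filter fun e => v ∈ e ∧ e ⊆ S), e1 ≠ e2 →
        Disjoint (e1.erase v) (e2.erase v) := by
      intro e1 h1 e2 h2 hne
      rw [mem_filter] at h1 h2
      by_contra hnd
      rw [Finset.not_disjoint_iff] at hnd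
      obtain ⟨x, hx1, hx2⟩ := hnd
      have hxv : x ≠ v := (mem_erase.1 hx1).1
      have hsub : ({v, x} : Finset V) ⊆ e1 ∩ e2 := by
        intro y hy
        rw [mem_insert, mem_singleton] at hy
        rcases hy with rfl | rfl
        · exact mem_inter.2 ⟨h1.2.1, h2.2.1⟩
        · exact mem_inter.2 ⟨mem_of_mem_erase hx1, mem_of_mem_erase hx2⟩
      have h2le : 2 ≤ (e1 ∩ e2).card := by
        calc 2 = ({v, x} : Finset V).card := by
              rw [card_insert_of_notMem (by simp [Ne.symm hxv]), card_singleton]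
          _ ≤ _ := card_le_card hsub
      have hle3 : (e1 ∩ e2).card ≤ 3 := by
        calc (e1 ∩ e2).card ≤ e1.card := card_le_card inter_subset_left
          _ = 3 := hE3 e1 h1.1
      have hne3 : (e1 ∩ e2).card ≠ 3 := by
        intro h3
        have he : e1 ∩ e2 = e1 :=
          eq_of_subset_of_card_le inter_subset_left (by rw [h3, hE3 e1 h1.1])
        have he12 : e1 ⊆ e2 := by rw [← he]; exact inter_subset_right
        exact hne (eq_of_subset_of_card_le he12
          (by rw [hE3 e1 h1.1, hE3 e2 h2.1]))
      have hu := card_union_add_card_inter e1 e2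
      rw [hE3 e1 h1.1, hE3 e2 h2.1] at hu
      exact hS e1 h1.1 e2 h2.1 h1.2.2 h2.2.2 hne (by omega)
    have hAinB : 2 * (E.filter fun e => v ∈ e ∧ e ⊆ S).card ≤ s - 1 := by
      have hbi : ((E.filter fun e => v ∈ e ∧ e ⊆ S).biUnion fun e => e.erase v).card
          = ∑ e ∈ (E.filter fun e => v ∈ e ∧ e ⊆ S), (e.erase v).card :=
        card_biUnion hdisj
      have hsum : ∑ e ∈ (E.filter fun e => v ∈ e ∧ e ⊆ S), (e.erase v).card
          = 2 * (E.filter fun e => v ∈ e ∧ e ⊆ S).card := by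
        rw [Finset.sum_congr rfl
          (fun e he => hcard2 e (mem_filter.1 he).1 (mem_filter.1 he).2.1)]
        rw [sum_const, smul_eq_mul, mul_comm]
      have hsub : ((E.filter fun e => v ∈ e ∧ e ⊆ S).biUnion fun e => e.erase v)
          ⊆ S.erase v := by
        intro x hx
        rw [mem_biUnion] at hx
        obtain ⟨e, he, hxe⟩ := hx
        rw [mem_filter] at he
        exact erase_subset_erase v he.2.2 hxe
      calc 2 * (E.filter fun e => v ∈ e ∧ e ⊆ S).card
          = ((E.filter fun e => v ∈ e ∧ e ⊆ S).biUnion fun e => e.erase v).card := by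
            rw [hbi, hsum]
        _ ≤ (S.erase v).card := card_le_card hsub
        _ = s - 1 := by rw [card_erase_of_mem hv]
    exact ⟨by omega, hAinB⟩
  -- rational per-vertex consequence
  have keyQ : ∀ v ∈ S, ((s - 1 : ℕ).choose 2 : ℚ) - ((3 * k).choose 2 : ℚ)
      + 3 * (n : ℚ) / 8 + (if 8 ∣ n then (1 : ℚ) else -1/2)
      ≤ ((E.filter fun e => v ∈ e ∧ e ⊆ S).card : ℚ) := by
    intro v hv
    obtain ⟨h1, _⟩ := key v hv
    have hδv := hδ v
    rw [hm] at hδv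
    have hmono : (s - 1).choose 2 ≤ (n - 1).choose 2 :=
      Nat.choose_le_choose 2 (by omega)
    have h1' : ((E.filter fun e => v ∈ e).card : ℚ)
        ≤ ((n - 1).choose 2 : ℚ) - ((s - 1).choose 2 : ℚ)
          + ((E.filter fun e => v ∈ e ∧ e ⊆ S).card : ℚ) := by
      have := (Nat.cast_le (α := ℚ)).2 h1
      push_cast [Nat.cast_sub hmono] at this ⊢
      linarith
    linarith
  obtain ⟨v, hv⟩ := card_pos.1 (show 0 < s by omega)
  -- step 1 : s = 3k+1
  have hseq : s = 3 * k + 1 := by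
    by_contra hne
    have hTs : 3 * k + 2 ≤ s := by omega
    obtain ⟨_, h2⟩ := key v hv
    have hq := keyQ v hv
    have hc : (if 8 ∣ n then (1 : ℚ) else -1/2) ≥ -1/2 := by
      split <;> norm_num
    have h2' : 2 * ((E.filter fun e => v ∈ e ∧ e ⊆ S).card : ℚ) ≤ ((s - 1 : ℕ) : ℚ) :=
      by exact_mod_cast h2
    have hT : ((s - 1 : ℕ) : ℚ) = (s : ℚ) - 1 := by
      push_cast [Nat.cast_sub (show 1 ≤ s by omega)]; ring
    have hTge : ((3 * k + 1 : ℕ) : ℚ) ≤ ((s - 1 : ℕ) : ℚ) := by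
      exact_mod_cast (show 3 * k + 1 ≤ s - 1 by omega)
    rw [Nat.cast_choose_two, Nat.cast_choose_two] at hq
    have hnk : (n : ℚ) = 4 * (k : ℚ) := by exact_mod_cast hk
    have hkQ : (1 : ℚ) ≤ (k : ℚ) := by exact_mod_cast hk1
    push_cast [Nat.cast_sub (show 1 ≤ s by omega)] at hq h2' hTge
    nlinarith [hq, h2', hc, hTge, hkQ, hnk,
      mul_nonneg (show (0:ℚ) ≤ (s:ℚ) - 1 - (3*(k:ℚ)+1) by linarith)
        (show (0:ℚ) ≤ (s:ℚ) - 1 + 3*(k:ℚ) - 1 by linarith)]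
  -- now s - 1 = 3k
  by_cases h8 : 8 ∣ n
  · -- contradiction directly
    have hq := keyQ v hv
    obtain ⟨_, h2⟩ := key v hv
    rw [if_pos h8] at hq
    rw [hseq] at hq h2
    simp only [Nat.add_sub_cancel] at hq h2
    have h2' : 2 * ((E.filter fun e => v ∈ e ∧ e ⊆ S).card : ℚ) ≤ ((3 * k : ℕ) : ℚ) :=
      by exact_mod_cast h2
    have hnk : (n : ℚ) = 4 * (k : ℚ) := by exact_mod_cast hk
    push_cast at hq h2'
    linarith
  · -- k odd; every v in S has deg(v,S) = (3k-1)/2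
    have hkodd : k % 2 = 1 := by omega
    have haeq : ∀ v ∈ S, 2 * (E.filter fun e => v ∈ e ∧ e ⊆ S).card = 3 * k - 1 := by
      intro w hw
      have hq := keyQ w hw
      obtain ⟨_, h2⟩ := key w hw
      rw [if_neg h8] at hq
      rw [hseq] at hq h2
      simp only [Nat.add_sub_cancel] at hq h2
      have hnk : (n : ℚ) = 4 * (k : ℚ) := by exact_mod_cast hk
      have hlow : ((3 * k : ℕ) : ℚ) - 1
          ≤ 2 * ((E.filter fun e => w ∈ e ∧ e ⊆ S).card : ℚ) := by
        push_cast at hq ⊢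
        linarith
      have hlow' : 3 * k - 1 ≤ 2 * (E.filter fun e => w ∈ e ∧ e ⊆ S).card := by
        have : ((3 * k - 1 : ℕ) : ℚ) ≤ ((2 * (E.filter fun e => w ∈ e ∧ e ⊆ S).card : ℕ) : ℚ) := by
          push_cast [Nat.cast_sub (show 1 ≤ 3 * k by omega)]
          push_cast at hlow
          linarith
        exact_mod_cast this
      omega
    -- double counting
    have hdc : ∑ v ∈ S, (E.filter fun e => v ∈ e ∧ e ⊆ S).card
        = 3 * (E.filter fun e => e ⊆ S).card := by
      have hswap : ∀ w : V, (E.filter fun e => w ∈ e ∧ e ⊆ S)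
          = (E.filter fun e => e ⊆ S).filter (fun e => w ∈ e) := by
        intro w
        rw [filter_filter]
        exact filter_congr (fun e _ => by tauto)
      simp_rw [hswap, card_filter]
      rw [Finset.sum_comm]
      have hrow : ∀ e ∈ E.filter (fun e => e ⊆ S),
          (∑ w ∈ S, if w ∈ e then 1 else 0) = 3 := by
        intro e he
        rw [mem_filter] at he
        rw [← card_filter, filter_mem_eq_inter, inter_eq_right.2 he.2, hE3 e he.1]
      rw [Finset.sum_congr rfl hrow, sum_const, smul_eq_mul, mul_comm, card_filter]
    have hsum2 : s * (3 * k - 1) = 3 * (E.filter fun e => e ⊆ S).card * 2 := by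
      have : ∑ v ∈ S, 2 * (E.filter fun e => v ∈ e ∧ e ⊆ S).card
          = s * (3 * k - 1) := by
        rw [Finset.sum_congr rfl haeq, sum_const, smul_eq_mul]
      rw [← this, ← Finset.mul_sum, hdc]
      ring
    obtain ⟨j, hj⟩ : ∃ j, k = 2 * j + 1 := ⟨k / 2, by omega⟩
    rw [hseq] at hsum2
    have hexp : (3 * k + 1) * (3 * k - 1) = 36 * (j * j) + 36 * j + 8 := by
      have h1 : 3 * k + 1 = 6 * j + 4 := by omega
      have h2 : 3 * k - 1 = 6 * j + 2 := by omega
      rw [h1, h2]; ring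
    rw [hexp] at hsum2
    omega
end

section
/- Let S₀ be a set of 3n/4 + 1 vertices in a 3-graph H with n ∈ 4ℕ \ 8ℕ such that H[S₀] is C-free. Then there exists a vertex v₀ ∈ S₀ with deg(v₀, S₀) < 3n/8 - 1/2. -/
open Finset

/-- If `n ≡ 4 (mod 8)` (i.e. `4 ∣ n` but `8 ∤ n`), `S₀` is a set of `3n/4 + 1` vertices
of a 3-graph `H`, and `H[S₀]` is `C`-free, then some vertex `v₀ ∈ S₀` satisfies
`deg(v₀, S₀) < 3n/8 - 1/2`. -/
theorem stmt7 {V : Type*} [Fintype V] [DecidableEq V] (E : Finset (Finset V))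
    (hE3 : ∀ e ∈ E, e.card = 3)
    (h4 : 4 ∣ Fintype.card V) (h8 : ¬ 8 ∣ Fintype.card V)
    (S₀ : Finset V) (hS₀card : S₀.card = 3 * Fintype.card V / 4 + 1)
    (hS₀free : ∀ e₁ ∈ E, ∀ e₂ ∈ E, e₁ ⊆ S₀ → e₂ ⊆ S₀ → e₁ ≠ e₂ → (e₁ ∪ e₂).card ≠ 4) :
    ∃ v₀ ∈ S₀, ((E.filter fun e => v₀ ∈ e ∧ e ⊆ S₀).card : ℚ) <
      3 * (Fintype.card V : ℚ) / 8 - 1/2 := by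
  set k := Fintype.card V / 8 with hk
  have hn : Fintype.card V = 8 * k + 4 := by omega
  have hScard : S₀.card = 6 * k + 4 := by omega
  set deg : V → ℕ := fun v => (E.filter fun e => v ∈ e ∧ e ⊆ S₀).card with hdeg
  -- upper bound on degrees
  have hub : ∀ v ∈ S₀, deg v ≤ 3 * k + 1 := by
    intro v hv
    set F := E.filter fun e => v ∈ e ∧ e ⊆ S₀ with hF
    have hmemF : ∀ e ∈ F, e ∈ E ∧ v ∈ e ∧ e ⊆ S₀ := by
      intro e he; simpa [hF] using he
    have hdisj : ∀ e₁ ∈ F, ∀ e₂ ∈ F, e₁ ≠ e₂ →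
        Disjoint (e₁.erase v) (e₂.erase v) := by
      intro e₁ h₁ e₂ h₂ hne
      obtain ⟨h₁E, h₁v, h₁S⟩ := hmemF e₁ h₁
      obtain ⟨h₂E, h₂v, h₂S⟩ := hmemF e₂ h₂
      rw [Finset.disjoint_left]
      intro w hw₁ hw₂
      have hwv : w ≠ v := Finset.ne_of_mem_erase hw₁
      have hw₁' : w ∈ e₁ := Finset.mem_of_mem_erase hw₁
      have hw₂' : w ∈ e₂ := Finset.mem_of_mem_erase hw₂
      have hsub : {v, w} ⊆ e₁ ∩ e₂ := by
        intro x hx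
        simp only [Finset.mem_insert, Finset.mem_singleton] at hx
        rcases hx with rfl | rfl <;> simp [Finset.mem_inter, *]
      have hcard2 : 2 ≤ (e₁ ∩ e₂).card := by
        have : ({v, w} : Finset V).card = 2 := by
          rw [Finset.card_insert_of_notMem (by simpa using hwv.symm)]; simp
        calc 2 = ({v, w} : Finset V).card := this.symm
          _ ≤ (e₁ ∩ e₂).card := Finset.card_le_card hsub
      have hcard3 : (e₁ ∩ e₂).card ≤ 3 := by
        have h := Finset.card_le_card (Finset.inter_subset_left : e₁ ∩ e₂ ⊆ e₁)
        rwa [hE3 e₁ h₁E] at h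
      have hne3 : (e₁ ∩ e₂).card ≠ 3 := by
        intro h3
        have : e₁ ∩ e₂ = e₁ :=
          Finset.eq_of_subset_of_card_le Finset.inter_subset_left
            (by rw [hE3 e₁ h₁E, h3])
        have he12 : e₁ ⊆ e₂ := by
          rw [← this]; exact Finset.inter_subset_right
        exact hne (Finset.eq_of_subset_of_card_le he12
          (by rw [hE3 e₁ h₁E, hE3 e₂ h₂E]))
      have hu : (e₁ ∪ e₂).card + (e₁ ∩ e₂).card = 6 := by
        rw [Finset.card_union_add_card_inter, hE3 e₁ h₁E, hE3 e₂ h₂E]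
      exact hS₀free e₁ h₁E e₂ h₂E h₁S h₂S hne (by omega)
    have hbi : (F.biUnion fun e => e.erase v).card = 2 * F.card := by
      rw [Finset.card_biUnion hdisj]
      rw [Finset.sum_congr rfl fun e he => ?_, Finset.sum_const, smul_eq_mul,
        Nat.mul_comm]
      obtain ⟨heE, hev, -⟩ := hmemF e he
      rw [Finset.card_erase_of_mem hev, hE3 e heE]
    have hsub : (F.biUnion fun e => e.erase v) ⊆ S₀.erase v := by
      intro w hw
      simp only [Finset.mem_biUnion] at hw
      obtain ⟨e, he, hwe⟩ := hw
      obtain ⟨-, -, heS⟩ := hmemF e he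
      exact Finset.mem_erase.2 ⟨Finset.ne_of_mem_erase hwe,
        heS (Finset.mem_of_mem_erase hwe)⟩
    have := Finset.card_le_card hsub
    rw [hbi, Finset.card_erase_of_mem hv, hScard] at this
    have hdv : deg v = F.card := rfl
    omega
  -- double counting
  have hsum : ∑ v ∈ S₀, deg v = 3 * (E.filter (· ⊆ S₀)).card := by
    simp only [hdeg, Finset.card_filter]
    rw [Finset.sum_comm, Finset.mul_sum]
    refine Finset.sum_congr rfl fun e heE => ?_
    by_cases he : e ⊆ S₀
    · simp only [he, and_true, if_true, mul_one]
      rw [← Finset.card_filter]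
      have hfe : S₀.filter (· ∈ e) = e := by
        ext x; simp only [Finset.mem_filter]
        exact ⟨fun h => h.2, fun h => ⟨he h, h⟩⟩
      rw [hfe, hE3 e heE]
    · simp [he]
  by_contra h
  push_neg at h
  have h' : ∀ v ∈ S₀, 3 * k + 1 ≤ deg v := by
    intro v hv
    have hq := h v hv
    rw [hn] at hq
    have : ((3 * k + 1 : ℕ) : ℚ) ≤ (deg v : ℚ) := by push_cast at hq ⊢; linarith
    exact_mod_cast this
  have hdegeq : ∀ v ∈ S₀, deg v = 3 * k + 1 := fun v hv =>
    le_antisymm (hub v hv) (h' v hv)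
  have hsum2 : ∑ v ∈ S₀, deg v = (6 * k + 4) * (3 * k + 1) := by
    rw [Finset.sum_congr rfl hdegeq, Finset.sum_const, smul_eq_mul, hScard]
  have hmod : ((6 * k + 4) * (3 * k + 1)) % 3 = 1 := by
    rw [Nat.mul_mod]
    have h1 : (6 * k + 4) % 3 = 1 := by omega
    have h2 : (3 * k + 1) % 3 = 1 := by omega
    rw [h1, h2]
  omega
end

section
/- Suppose 0 < ρ ≤ 2·10⁻⁶ and n is sufficiently large. Let H be a 3-graph on n vertices with V(H) = X ∪ Z (disjoint) and |Z| = 3|X|. Assume every vertex v ∈ X satisfies: the number of pairs in Z not forming an edge with v is at most ρ·binom(|Z|,2); and every vertex v ∈ Z satisfies: the number of pairs (x,u) ∈ X×Z with {v,x,u} ∉ E(H) is at most ρ|X||Z|. Then H contains a perfect C-tiling. -/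
open Finset

/-!
Every `x ∈ X` receives a middle vertex `f x ∈ Z` and two end vertices `g (x, 0), g (x, 1) ∈ Z`
with `{x, f x, g (x, i)} ∈ E`, and the tiles are `{x, f x, g (x, 0), g (x, 1)}`. Call `(x, w)`
good if it misses at most `|X| / 4` links `{x, w, u}`, `u ∈ Z`; by Markov's inequality the degree
conditions leave at most `|X| / 4` bad pairs at every vertex. The middles are chosen greedily along
good pairs. A random choice would make every `z` the third vertex of few non-edges `{x, f x, z}`;
the greedy choice does so deterministically by keeping the potential `∑ z, 3 ^ load z` small,
where `load z` counts those non-edges with `(x, z)` good, and this forces `load z ≤ |X| / 2`.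
The `2|X|` leftover vertices of `Z` are then matched to the end slots by Hall's theorem: every `x`
is adjacent to at least `7|X| / 4` of them and each of them to at least `|X| / 4` vertices `x`, so
a set of slots either fits into one neighbourhood or its owners meet every leftover neighbourhood.
-/

theorem three_mul_sq_mul_sixteen_pow_lt {m : ℕ} (hm : 16 ≤ m) :
    3 * m ^ 2 * 16 ^ m < 27 ^ m := by
  induction m, hm using Nat.le_induction with
  | base => norm_num
  | succ m hm ih =>
    have hstep : 16 * (m + 1) ^ 2 ≤ 27 * m ^ 2 := by nlinarith
    calc 3 * (m + 1) ^ 2 * 16 ^ (m + 1) = 3 * (16 * (m + 1) ^ 2) * 16 ^ m := by ring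
      _ ≤ 3 * (27 * m ^ 2) * 16 ^ m := by gcongr
      _ = 27 * (3 * m ^ 2 * 16 ^ m) := by ring
      _ < 27 * 27 ^ m := by omega
      _ = 27 ^ (m + 1) := by ring

theorem two_mul_le_of_three_pow_mul_le {m l : ℕ} (hm : 16 ≤ m)
    (h : 3 ^ m * 3 ^ l ≤ 3 * m * 4 ^ m) : 2 * l ≤ m := by
  by_contra! hl
  have hlower : 3 * 27 ^ m ≤ (3 ^ m * 3 ^ l) ^ 2 :=
    calc 3 * 27 ^ m = 3 ^ (3 * m + 1) := by rw [pow_succ, pow_mul]; ring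
      _ ≤ 3 ^ (2 * (m + l)) := Nat.pow_le_pow_right (by norm_num) (by omega)
      _ = (3 ^ m * 3 ^ l) ^ 2 := by ring
  have hupper : (3 ^ m * 3 ^ l) ^ 2 ≤ 3 * (3 * m ^ 2 * 16 ^ m) :=
    calc (3 ^ m * 3 ^ l) ^ 2 ≤ (3 * m * 4 ^ m) ^ 2 := Nat.pow_le_pow_left h 2
      _ = 3 * (3 * m ^ 2 * 16 ^ m) := by
        rw [show (16 : ℕ) = 4 ^ 2 by norm_num, ← pow_mul, mul_comm 2 m, pow_mul]; ring
  have := three_mul_sq_mul_sixteen_pow_lt hm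
  omega

theorem four_mul_card_filter_lt_le {ι : Type*} (s : Finset ι) (f : ι → ℕ) {m : ℕ}
    (h : 16 * ∑ i ∈ s, f i ≤ m ^ 2) : 4 * #{i ∈ s | m < 4 * f i} ≤ m := by
  have hmarkov : #{i ∈ s | m < 4 * f i} * m ≤ 4 * ∑ i ∈ s, f i :=
    calc #{i ∈ s | m < 4 * f i} * m ≤ ∑ i ∈ s with m < 4 * f i, 4 * f i := by
          simpa using card_nsmul_le_sum _ _ m fun i hi => (mem_filter.1 hi).2.le
      _ ≤ ∑ i ∈ s, 4 * f i := sum_le_sum_of_subset (filter_subset _ _)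
      _ = 4 * ∑ i ∈ s, f i := (mul_sum _ _ _).symm
  rcases Nat.eq_zero_or_pos m with rfl | hm
  · have : ∀ i ∈ s, f i = 0 := by simpa using h
    simpa using this
  · have : m * (4 * #{i ∈ s | m < 4 * f i}) ≤ m * m := by nlinarith
    exact Nat.le_of_mul_le_mul_left this hm

section Greedy

variable {α β : Type*} [DecidableEq α] [DecidableEq β]

theorem card_filter_insert_update {S : Finset α} {x : α} (hx : x ∉ S) (f : α → β) (w : β)
    (hits : α → β → Finset β) (z : β) :
    #{y ∈ insert x S | z ∈ hits y (Function.update f x w y)} =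
      #{y ∈ S | z ∈ hits y (f y)} + if z ∈ hits x w then 1 else 0 := by
  have hS : ∀ y ∈ S, Function.update f x w y = f y :=
    fun y hy => Function.update_of_ne (ne_of_mem_of_not_mem hy hx) _ _
  rw [filter_insert, Function.update_self, filter_congr fun y hy => by rw [hS y hy]]
  split_ifs <;> simp [hx]

theorem exists_mem_six_mul_sum_le (C Z : Finset β) (hits : β → Finset β) (φ : β → ℕ) {k : ℕ}
    (hC : 6 * k < #C) (hk : ∀ z ∈ Z, #{w ∈ C | z ∈ hits w} ≤ k) :
    ∃ w ∈ C, 6 * ∑ z ∈ Z with z ∈ hits w, φ z ≤ ∑ z ∈ Z, φ z := by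
  have hdouble : ∑ w ∈ C, ∑ z ∈ Z with z ∈ hits w, φ z ≤ k * ∑ z ∈ Z, φ z :=
    calc ∑ w ∈ C, ∑ z ∈ Z with z ∈ hits w, φ z = ∑ z ∈ Z, #{w ∈ C | z ∈ hits w} * φ z := by
          simp_rw [sum_filter, sum_comm (s := C), card_eq_sum_ones, sum_filter, sum_mul,
            ite_mul, one_mul, zero_mul]
      _ ≤ ∑ z ∈ Z, k * φ z := sum_le_sum fun z hz => Nat.mul_le_mul_right _ (hk z hz)
      _ = k * ∑ z ∈ Z, φ z := (mul_sum _ _ _).symm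
  refine exists_le_of_sum_le (card_pos.1 (by omega)) ?_
  calc ∑ w ∈ C, 6 * ∑ z ∈ Z with z ∈ hits w, φ z ≤ 6 * (k * ∑ z ∈ Z, φ z) := by
        rw [← mul_sum]; exact Nat.mul_le_mul_left _ hdouble
    _ ≤ #C * ∑ z ∈ Z, φ z := by rw [← mul_assoc]; exact Nat.mul_le_mul_right _ hC.le
    _ = ∑ _w ∈ C, ∑ z ∈ Z, φ z := by rw [sum_const, smul_eq_mul]

/-- By averaging, some unused candidate raises the potential `∑ z, 3 ^ load z` by at most a third,
so every step multiplies it by at most `4 / 3`. -/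
theorem exists_injOn_three_pow_mul_sum_le [Nonempty β] (S : Finset α) (Z : Finset β)
    (cand : α → Finset β) (hits : α → β → Finset β) {k : ℕ} (hcand : ∀ x ∈ S, #S + 6 * k ≤ #(cand x))
    (hhits : ∀ x ∈ S, ∀ z ∈ Z, #{w ∈ cand x | z ∈ hits x w} ≤ k) :
    ∃ f : α → β, Set.InjOn f S ∧ (∀ x ∈ S, f x ∈ cand x) ∧
      3 ^ #S * ∑ z ∈ Z, 3 ^ #{x ∈ S | z ∈ hits x (f x)} ≤ #Z * 4 ^ #S := by
  induction S using Finset.induction_on with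
  | empty => exact ⟨fun _ => Classical.arbitrary β, by simp, by simp, by simp⟩
  | insert x S hx ih =>
    rw [card_insert_of_notMem hx] at hcand ⊢
    obtain ⟨f, hf_inj, hf_cand, hf_pot⟩ :=
      ih (fun y hy => le_trans (by omega) (hcand y (mem_insert_of_mem hy)))
        (fun y hy => hhits y (mem_insert_of_mem hy))
    have hC : 6 * k < #(cand x \ S.image f) := by
      have := le_card_sdiff (S.image f) (cand x)
      have := card_image_le (s := S) (f := f)
      have := hcand x (mem_insert_self x S)
      omega
    obtain ⟨w, hw, hw_pot⟩ := exists_mem_six_mul_sum_le _ Z (hits x)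
      (fun z => 3 ^ #{y ∈ S | z ∈ hits y (f y)}) hC
      fun z hz => (card_le_card (filter_subset_filter _ sdiff_subset)).trans
        (hhits x (mem_insert_self x S) z hz)
    obtain ⟨hw_cand, hw_img⟩ := mem_sdiff.1 hw
    have hS : Set.EqOn (Function.update f x w) f S :=
      fun y hy => Function.update_of_ne (ne_of_mem_of_not_mem hy hx) _ _
    refine ⟨Function.update f x w, ?_, ?_, ?_⟩
    · rw [coe_insert, Set.injOn_insert (by simpa using hx), hS.image_eq, Function.update_self]
      exact ⟨hf_inj.congr hS.symm, by simpa using hw_img⟩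
    · simp only [mem_insert, forall_eq_or_imp, Function.update_self]
      exact ⟨hw_cand, fun y hy => hS hy ▸ hf_cand y hy⟩
    · have hsum : ∑ z ∈ Z, 3 ^ #{y ∈ insert x S | z ∈ hits y (Function.update f x w y)} =
          ∑ z ∈ Z, 3 ^ #{y ∈ S | z ∈ hits y (f y)} +
            2 * ∑ z ∈ Z with z ∈ hits x w, 3 ^ #{y ∈ S | z ∈ hits y (f y)} := by
        simp_rw [card_filter_insert_update hx, mul_sum, sum_filter, ← sum_add_distrib]
        refine sum_congr rfl fun z _ => ?_
        split_ifs <;> ring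
      rw [hsum]
      calc 3 ^ (#S + 1) * (∑ z ∈ Z, 3 ^ #{y ∈ S | z ∈ hits y (f y)} +
            2 * ∑ z ∈ Z with z ∈ hits x w, 3 ^ #{y ∈ S | z ∈ hits y (f y)})
          ≤ 3 ^ #S * (4 * ∑ z ∈ Z, 3 ^ #{y ∈ S | z ∈ hits y (f y)}) := by
            rw [pow_succ]; nlinarith [Nat.zero_le (3 ^ #S)]
        _ ≤ #Z * 4 ^ (#S + 1) := by rw [pow_succ]; nlinarith

end Greedy

theorem card_le_two_mul_card_image_fst {κ : Type*} [DecidableEq κ] (s : Finset (κ × Bool)) :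
    #s ≤ 2 * #(s.image Prod.fst) := by
  calc #s ≤ #(s.image Prod.fst ×ˢ s.image Prod.snd) := card_le_card subset_product
    _ ≤ #(s.image Prod.fst) * 2 := by
      rw [card_product]; exact Nat.mul_le_mul_left _ (card_le_univ _)
    _ = 2 * #(s.image Prod.fst) := mul_comm _ _

theorem exists_injective_two_slots {α β : Type*} [DecidableEq β] (X : Finset α) (A : Finset β)
    (N : α → Finset β) (hA : #A = 2 * #X)
    (hdeg : ∀ x ∈ X, ∀ a ∈ A, 2 * #X ≤ 2 * #{y ∈ X | a ∈ N y} + #(N x)) :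
    ∃ g : X × Bool → β, Function.Injective g ∧ ∀ p, g p ∈ N p.1 := by
  classical
  refine (all_card_le_biUnion_card_iff_exists_injective fun p : X × Bool => N p.1).1 fun s => ?_
  obtain rfl | ⟨p, hp⟩ := s.eq_empty_or_nonempty
  · simp
  by_cases hsmall : #s ≤ #(N p.1)
  · exact hsmall.trans (card_le_card (subset_biUnion_of_mem (fun q => N q.1) hp))
  set owners := (s.image Prod.fst).map (Function.Embedding.subtype (· ∈ X))
  have howners : #s ≤ 2 * #owners := by
    rw [card_map]; exact card_le_two_mul_card_image_fst s
  have howners_sub : owners ⊆ X := by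
    intro x hx
    obtain ⟨q, -, rfl⟩ := mem_map.1 hx
    exact q.2
  have hcover : A ⊆ s.biUnion fun q => N q.1 := by
    intro a ha
    have := hdeg p.1 p.1.2 a ha
    obtain ⟨x, hx⟩ := inter_nonempty_of_card_lt_card_add_card
      (filter_subset (fun y => a ∈ N y) X) howners_sub (by omega)
    simp only [owners, mem_inter, mem_filter, mem_map, mem_image] at hx
    obtain ⟨⟨-, hax⟩, y, ⟨q, hq, rfl⟩, rfl⟩ := hx
    exact mem_biUnion.2 ⟨q, hq, hax⟩
  calc #s ≤ 2 * #X := by simpa [mul_comm] using card_le_univ s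
    _ = #A := hA.symm
    _ ≤ _ := card_le_card hcover

def IsPerfectCTiling {V : Type*} [DecidableEq V] (E T : Finset (Finset V)) : Prop :=
  (∀ t ∈ T, t.card = 4 ∧ ∃ e₁ ∈ E, ∃ e₂ ∈ E, e₁ ≠ e₂ ∧ e₁ ⊆ t ∧ e₂ ⊆ t) ∧
    (T : Set (Finset V)).PairwiseDisjoint id ∧ ∀ v : V, ∃ t ∈ T, v ∈ t

theorem exists_isPerfectCTiling_of_equiv {V κ : Type*} [DecidableEq V] [Fintype κ]
    (E : Finset (Finset V)) (τ : κ ⊕ κ ⊕ κ × Bool ≃ V)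
    (hE : ∀ k i, {τ (.inl k), τ (.inr (.inl k)), τ (.inr (.inr (k, i)))} ∈ E) :
    ∃ T, IsPerfectCTiling E T := by
  let tile : κ → Finset V := fun k =>
    {τ (.inl k), τ (.inr (.inl k)), τ (.inr (.inr (k, false))), τ (.inr (.inr (k, true)))}
  refine ⟨univ.image tile, ?_, ?_, fun v => ?_⟩
  · simp only [mem_image, mem_univ, true_and, forall_exists_index, forall_apply_eq_imp_iff]
    intro k
    refine ⟨by simp [tile, card_insert_of_notMem], _, hE k false, _, hE k true, fun h => ?_,
      by intro v; simp [tile]; tauto, by intro v; simp [tile]; tauto⟩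
    have := h ▸ mem_insert_of_mem (mem_insert_of_mem (mem_singleton_self _))
    simp at this
  · simp only [coe_image, coe_univ, Set.image_univ]
    rintro _ ⟨k, rfl⟩ _ ⟨l, rfl⟩ hkl
    have : k ≠ l := by rintro rfl; exact hkl rfl
    simp [tile, Function.onFun, disjoint_left, this]
  · obtain ⟨p, rfl⟩ := τ.surjective v
    rcases p with k | k | ⟨k, _ | _⟩ <;> exact ⟨tile k, by simp, by simp [tile]⟩

section Tiling

variable {V : Type*} [DecidableEq V]

def missingCodeg (E : Finset (Finset V)) (Z : Finset V) (x w : V) : ℕ :=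
  #{u ∈ Z.erase w | {x, w, u} ∉ E}

theorem sum_missingCodeg_le (E : Finset (Finset V)) (Z : Finset V) (x : V) :
    ∑ w ∈ Z, missingCodeg E Z x w ≤ 2 * #{p ∈ Z.powersetCard 2 | insert x p ∉ E} := by
  set B := {p ∈ Z.powersetCard 2 | insert x p ∉ E}
  calc ∑ w ∈ Z, missingCodeg E Z x w ≤ ∑ w ∈ Z, #{p ∈ B | w ∈ p} := by
        refine sum_le_sum fun w hw => card_le_card_of_injOn (fun u => {w, u}) ?_ ?_
        · intro u hu
          obtain ⟨⟨huw, hu⟩, hE⟩ := by simpa using hu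
          simp [B, insert_subset_iff, hw, hu, card_pair (Ne.symm huw), hE]
        · intro u hu u' _ h
          have hmem : u ∈ ({w, u'} : Finset V) :=
            (show ({w, u} : Finset V) = {w, u'} from h) ▸ by simp
          have huw : u ≠ w := by simp at hu; exact hu.1.1
          simpa [huw] using hmem
    _ = ∑ p ∈ B, #{w ∈ Z | w ∈ p} := by simp_rw [card_eq_sum_ones, sum_filter]; exact sum_comm
    _ = ∑ p ∈ B, 2 := sum_congr rfl fun p hp => by
        obtain ⟨⟨hpZ, hp2⟩, -⟩ := by simpa [B] using hp
        rw [filter_mem_eq_inter, inter_eq_right.2 hpZ, hp2]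
    _ = 2 * #B := by rw [sum_const, smul_eq_mul, mul_comm]

theorem sum_missingCodeg_eq (E : Finset (Finset V)) (X Z : Finset V) (z : V) :
    ∑ x ∈ X, missingCodeg E Z x z = #{p ∈ X ×ˢ Z.erase z | {z, p.1, p.2} ∉ E} := by
  rw [card_filter, sum_product]
  refine sum_congr rfl fun x _ => ?_
  rw [missingCodeg, card_filter]
  exact sum_congr rfl fun u _ => by rw [insert_comm]

theorem exists_middle_map (E : Finset (Finset V)) {X Z : Finset V} (hZ : #Z = 3 * #X)
    (hm : 16 ≤ #X) (hX : ∀ x ∈ X, 4 * #{w ∈ Z | #X < 4 * missingCodeg E Z x w} ≤ #X) :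
    ∃ f : V → V, Set.InjOn f X ∧ (∀ x ∈ X, f x ∈ Z ∧ 4 * missingCodeg E Z x (f x) ≤ #X) ∧
      ∀ z ∈ Z, 2 * #{x ∈ X | 4 * missingCodeg E Z x z ≤ #X ∧ z ≠ f x ∧ {x, z, f x} ∉ E} ≤ #X := by
  obtain ⟨x₀, -⟩ : X.Nonempty := card_pos.1 (by omega)
  have : Nonempty V := ⟨x₀⟩
  set cand : V → Finset V := fun x => {w ∈ Z | 4 * missingCodeg E Z x w ≤ #X}
  set hits : V → V → Finset V :=
    fun x w => {z ∈ Z.erase w | 4 * missingCodeg E Z x z ≤ #X ∧ {x, z, w} ∉ E}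
  have hcand : ∀ x ∈ X, #X + 6 * (#X / 4) ≤ #(cand x) := by
    intro x hx
    have := hX x hx
    have := card_filter_add_card_filter_not (s := Z) (fun w => 4 * missingCodeg E Z x w ≤ #X)
    simp only [not_le] at this
    simp only [cand]
    omega
  have hhits : ∀ x ∈ X, ∀ z ∈ Z, #{w ∈ cand x | z ∈ hits x w} ≤ #X / 4 := by
    intro x _ z _
    by_cases hxz : 4 * missingCodeg E Z x z ≤ #X
    · have : #{w ∈ cand x | z ∈ hits x w} ≤ missingCodeg E Z x z := by
        refine card_le_card fun w hw => ?_
        simp only [cand, hits, mem_filter, mem_erase] at hw ⊢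
        exact ⟨⟨Ne.symm hw.2.1.1, hw.1.1⟩, hw.2.2.2⟩
      omega
    · simp [hits, hxz]
  obtain ⟨f, hf_inj, hf_cand, hf_pot⟩ := exists_injOn_three_pow_mul_sum_le X Z cand hits hcand hhits
  refine ⟨f, hf_inj, fun x hx => by simpa [cand] using hf_cand x hx, fun z hz => ?_⟩
  refine two_mul_le_of_three_pow_mul_le hm ?_
  calc 3 ^ #X * 3 ^ #{x ∈ X | 4 * missingCodeg E Z x z ≤ #X ∧ z ≠ f x ∧ {x, z, f x} ∉ E}
      ≤ 3 ^ #X * ∑ z ∈ Z, 3 ^ #{x ∈ X | z ∈ hits x (f x)} := by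
        refine Nat.mul_le_mul_left _ (le_of_eq_of_le ?_ (single_le_sum (by simp) hz))
        simp [hits, hz, and_left_comm]
    _ ≤ #Z * 4 ^ #X := hf_pot
    _ = 3 * #X * 4 ^ #X := by rw [hZ]

theorem exists_end_map (E : Finset (Finset V)) {X Z : Finset V} (hZ : #Z = 3 * #X)
    (f : V → V) (hf_inj : Set.InjOn f X)
    (hf : ∀ x ∈ X, f x ∈ Z ∧ 4 * missingCodeg E Z x (f x) ≤ #X)
    (hload : ∀ z ∈ Z,
      2 * #{x ∈ X | 4 * missingCodeg E Z x z ≤ #X ∧ z ≠ f x ∧ {x, z, f x} ∉ E} ≤ #X)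
    (hZdeg : ∀ z ∈ Z, 4 * #{x ∈ X | #X < 4 * missingCodeg E Z x z} ≤ #X) :
    ∃ g : X × Bool → V, Function.Injective g ∧
      ∀ p, g p ∈ Z \ X.image f ∧ {(p.1 : V), f p.1, g p} ∈ E := by
  set A := Z \ X.image f
  have hA : #A = 2 * #X := by
    have himage : X.image f ⊆ Z := by
      intro _ h
      obtain ⟨x, hx, rfl⟩ := mem_image.1 h
      exact (hf x hx).1
    rw [card_sdiff_of_subset himage, card_image_of_injOn hf_inj, hZ]
    omega
  set N : V → Finset V := fun x => {a ∈ A | {x, f x, a} ∈ E}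
  suffices hdeg : ∀ x ∈ X, ∀ a ∈ A, 2 * #X ≤ 2 * #{y ∈ X | a ∈ N y} + #(N x) by
    obtain ⟨g, hg_inj, hg⟩ := exists_injective_two_slots X A N hA hdeg
    exact ⟨g, hg_inj, fun p => mem_filter.1 (hg p)⟩
  intro x hx a ha
  obtain ⟨haZ, ha_img⟩ := mem_sdiff.1 ha
  have hx_nonedges : #{b ∈ A | {x, f x, b} ∉ E} ≤ missingCodeg E Z x (f x) := by
    refine card_le_card fun b hb => ?_
    obtain ⟨hbA, hbE⟩ := mem_filter.1 hb
    obtain ⟨hbZ, hb_img⟩ := mem_sdiff.1 hbA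
    exact mem_filter.2 ⟨mem_erase.2 ⟨fun h => hb_img (h ▸ mem_image_of_mem f hx), hbZ⟩, hbE⟩
  have ha_nonedges : #{y ∈ X | {y, f y, a} ∉ E} ≤ #{y ∈ X | #X < 4 * missingCodeg E Z y a} +
      #{y ∈ X | 4 * missingCodeg E Z y a ≤ #X ∧ a ≠ f y ∧ {y, a, f y} ∉ E} := by
    refine (card_le_card fun y hy => ?_).trans (card_union_le _ _)
    obtain ⟨hyX, hyE⟩ := mem_filter.1 hy
    rw [mem_union, mem_filter, mem_filter, pair_comm]
    by_cases h : #X < 4 * missingCodeg E Z y a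
    · exact Or.inl ⟨hyX, h⟩
    · exact Or.inr ⟨hyX, by omega, fun h => ha_img (h ▸ mem_image_of_mem f hyX), hyE⟩
  have hx_split := card_filter_add_card_filter_not (s := A) (fun b => {x, f x, b} ∈ E)
  have ha_split := card_filter_add_card_filter_not (s := X) (fun y => {y, f y, a} ∈ E)
  have ha_deg : #{y ∈ X | a ∈ N y} = #{y ∈ X | {y, f y, a} ∈ E} := by
    simp [N, ha]
  have hNx : #(N x) = #{b ∈ A | {x, f x, b} ∈ E} := rfl
  have := hf x hx
  have := hload a haZ
  have := hZdeg a haZ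
  omega

theorem exists_isPerfectCTiling_of_missingCodeg [Fintype V] (E : Finset (Finset V))
    {X : Finset V} (hZ : #Xᶜ = 3 * #X) (hm : 16 ≤ #X)
    (hX : ∀ x ∈ X, 4 * #{w ∈ Xᶜ | #X < 4 * missingCodeg E Xᶜ x w} ≤ #X)
    (hZdeg : ∀ z ∈ Xᶜ, 4 * #{x ∈ X | #X < 4 * missingCodeg E Xᶜ x z} ≤ #X) :
    ∃ T, IsPerfectCTiling E T := by
  obtain ⟨f, hf_inj, hf, hload⟩ := exists_middle_map E hZ hm hX
  obtain ⟨g, hg_inj, hg⟩ := exists_end_map E hZ f hf_inj hf hload hZdeg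
  let τ : X ⊕ X ⊕ X × Bool → V := Sum.elim (↑) (Sum.elim (fun x => f x) g)
  have hτ : τ.Injective := by
    refine Subtype.val_injective.sumElim (hf_inj.injective.sumElim hg_inj fun x p h => ?_) ?_
    · exact (mem_sdiff.1 (hg p).1).2 (h ▸ mem_image_of_mem f x.2)
    · rintro x (y | p) h
      · exact mem_compl.1 (hf y y.2).1 ((show (x : V) = f y from h) ▸ x.2)
      · exact mem_compl.1 (mem_sdiff.1 (hg p).1).1 ((show (x : V) = g p from h) ▸ x.2)
  have hcard : Fintype.card (X ⊕ X ⊕ X × Bool) = Fintype.card V := by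
    have := card_add_card_compl X
    simp only [Fintype.card_sum, Fintype.card_prod, Fintype.card_coe, Fintype.card_bool]
    omega
  exact exists_isPerfectCTiling_of_equiv E
    (.ofBijective τ ((Fintype.bijective_iff_injective_and_card τ).2 ⟨hτ, hcard⟩))
    fun k i => (hg (k, i)).2

end Tiling

theorem thirty_two_mul_le_sq_of_le_mul_choose {B m : ℕ} {ρ : ℝ} (hρ : ρ ≤ 2 / 10 ^ 6)
    (hB : (B : ℝ) ≤ ρ * ((3 * m).choose 2 : ℕ)) : 32 * B ≤ m ^ 2 := by
  have hchoose : (((3 * m).choose 2 : ℕ) : ℝ) ≤ (3 * m : ℕ) ^ 2 / 2 := by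
    simpa using Nat.choose_le_pow_div (α := ℝ) 2 (3 * m)
  have : (B : ℝ) ≤ 2 / 10 ^ 6 * ((3 * m : ℕ) ^ 2 / 2) :=
    hB.trans ((mul_le_mul_of_nonneg_right hρ (Nat.cast_nonneg _)).trans
      (mul_le_mul_of_nonneg_left hchoose (by norm_num)))
  have : (32 * B : ℝ) ≤ m ^ 2 := by push_cast at this; nlinarith [sq_nonneg (m : ℝ)]
  exact_mod_cast this

theorem sixteen_mul_le_sq_of_le_mul_mul {B m : ℕ} {ρ : ℝ} (hρ : ρ ≤ 2 / 10 ^ 6)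
    (hB : (B : ℝ) ≤ ρ * m * (3 * m : ℕ)) : 16 * B ≤ m ^ 2 := by
  have : (B : ℝ) ≤ 2 / 10 ^ 6 * (m * (3 * m : ℕ)) := by
    rw [← mul_assoc]
    exact hB.trans (mul_le_mul_of_nonneg_right (mul_le_mul_of_nonneg_right hρ (by positivity))
      (by positivity))
  have : (16 * B : ℝ) ≤ m ^ 2 := by push_cast at this; nlinarith [sq_nonneg (m : ℝ)]
  exact_mod_cast this

theorem stmt13_general (ρ : ℝ) (hρ1 : ρ ≤ 2 / 10 ^ 6) :
    ∃ n₀ : ℕ, ∀ (V : Type) (_ : Fintype V) (_ : DecidableEq V)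
      (E : Finset (Finset V)), (∀ e ∈ E, e.card = 3) →
      n₀ ≤ Fintype.card V →
      ∀ X : Finset V, (Xᶜ : Finset V).card = 3 * X.card →
      (∀ v ∈ X, ((((Xᶜ : Finset V).powersetCard 2).filter
          fun p => insert v p ∉ E).card : ℝ) ≤ ρ * ((Xᶜ : Finset V).card.choose 2 : ℝ)) →
      (∀ v ∈ (Xᶜ : Finset V),
        (((X ×ˢ (Xᶜ : Finset V).erase v).filter
          fun p => ({v, p.1, p.2} : Finset V) ∉ E).card : ℝ) ≤
          ρ * X.card * (Xᶜ : Finset V).card) →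
      ∃ T : Finset (Finset V),
        (∀ t ∈ T, t.card = 4 ∧ ∃ e₁ ∈ E, ∃ e₂ ∈ E, e₁ ≠ e₂ ∧ e₁ ⊆ t ∧ e₂ ⊆ t) ∧
        (T : Set (Finset V)).PairwiseDisjoint id ∧
        (∀ v : V, ∃ t ∈ T, v ∈ t) := by
  refine ⟨64, fun V _ _ E _ hn X hZ hX hZdeg => ?_⟩
  have hm : 16 ≤ #X := by have := card_add_card_compl X; omega
  refine exists_isPerfectCTiling_of_missingCodeg E hZ hm (fun x hx => ?_) (fun z hz => ?_)
  · refine four_mul_card_filter_lt_le _ _ ?_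
    have := sum_missingCodeg_le E Xᶜ x
    have := thirty_two_mul_le_sq_of_le_mul_choose hρ1 (hZ ▸ hX x hx)
    omega
  · refine four_mul_card_filter_lt_le _ _ ?_
    rw [sum_missingCodeg_eq]
    exact sixteen_mul_le_sq_of_le_mul_mul hρ1 (hZ ▸ hZdeg z hz)

/-- Lemma 4.4: suppose `0 < ρ ≤ 2·10⁻⁶` and `n` is sufficiently large. If `H` is a
3-graph on `n` vertices with vertex set partitioned as `X ∪ Z` (here `Z = Xᶜ`) with
`|Z| = 3|X|`, every `v ∈ X` has at most `ρ·binom(|Z|,2)` non-neighbouring pairs in `Z`,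
and every `v ∈ Z` has at most `ρ|X||Z|` non-edges into `X × Z`, then `H` contains a
perfect `C`-tiling. -/
theorem stmt13 (ρ : ℝ) (hρ0 : 0 < ρ) (hρ1 : ρ ≤ 2 / 10 ^ 6) :
    ∃ n₀ : ℕ, ∀ (V : Type) (_ : Fintype V) (_ : DecidableEq V)
      (E : Finset (Finset V)), (∀ e ∈ E, e.card = 3) →
      n₀ ≤ Fintype.card V →
      ∀ X : Finset V, (Xᶜ : Finset V).card = 3 * X.card →
      (∀ v ∈ X, ((((Xᶜ : Finset V).powersetCard 2).filter
          fun p => insert v p ∉ E).card : ℝ) ≤ ρ * ((Xᶜ : Finset V).card.choose 2 : ℝ)) →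
      (∀ v ∈ (Xᶜ : Finset V),
        (((X ×ˢ (Xᶜ : Finset V).erase v).filter
          fun p => ({v, p.1, p.2} : Finset V) ∉ E).card : ℝ) ≤
          ρ * X.card * (Xᶜ : Finset V).card) →
      ∃ T : Finset (Finset V),
        (∀ t ∈ T, t.card = 4 ∧ ∃ e₁ ∈ E, ∃ e₂ ∈ E, e₁ ≠ e₂ ∧ e₁ ⊆ t ∧ e₂ ⊆ t) ∧
        (T : Set (Finset V)).PairwiseDisjoint id ∧
        (∀ v : V, ∃ t ∈ T, v ∈ t) :=
  stmt13_general ρ hρ1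
end

section
/- Let H be a 3-graph with vertex partition pieces including sets A₂ and C₂, and suppose every vertex v ∈ A₂ has at most 2α·binom(|C₂|,2) non-neighboring pairs in C₂ (i.e., has degree at least (1-2α)binom(|C₂|,2) into C₂). If s ≤ (3ε/2)|C₂| is a nonnegative integer with (1-5α)binom(|C₂|,2) > 0 after removing 2s|C₂| pairs, and |A₂| ≥ 2s, then H contains s vertex-disjoint copies of C each with exactly two vertices in A₂ and two vertices in C₂. -/
open Finset

/-- The tiling `S`: if every vertex of `A₂` misses at most `2α·binom(|C₂|,2)` pairs of
`C₂`, and `s` is a nonnegative integer with `|A₂| ≥ 2s` such that even after removing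
`2s|C₂|` pairs at least `(1-5α)·binom(|C₂|,2) > 0` common neighbouring pairs remain,
then `H` contains `s` vertex-disjoint copies of `C`, each with exactly two vertices in
`A₂` and two vertices in `C₂`. -/
theorem stmt16 {V : Type*} [Fintype V] [DecidableEq V] (E : Finset (Finset V))
    (hE3 : ∀ e ∈ E, e.card = 3) (A₂ C₂ : Finset V) (hdisj : Disjoint A₂ C₂)
    (α : ℝ) (hα : 0 < α) (s : ℕ)
    (h1 : ∀ v ∈ A₂, (((C₂.powersetCard 2).filter fun p => insert v p ∉ E).card : ℝ) ≤
      2 * α * (C₂.card.choose 2 : ℝ))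
    (h2 : (1 - 5*α) * (C₂.card.choose 2 : ℝ) ≤
      (1 - 4*α) * (C₂.card.choose 2 : ℝ) - 2 * s * C₂.card)
    (h3 : (0 : ℝ) < (1 - 5*α) * (C₂.card.choose 2 : ℝ))
    (h4 : 2 * s ≤ A₂.card) :
    ∃ T : Finset (Finset V), T.card = s ∧
      (T : Set (Finset V)).PairwiseDisjoint id ∧
      ∀ t ∈ T, (t ∩ A₂).card = 2 ∧ (t ∩ C₂).card = 2 ∧ t.card = 4 ∧
        ∃ e₁ ∈ E, ∃ e₂ ∈ E, e₁ ≠ e₂ ∧ e₁ ⊆ t ∧ e₂ ⊆ t := by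
  classical
  suffices H : ∀ k, k ≤ s → ∃ T : Finset (Finset V), T.card = k ∧
      (T : Set (Finset V)).PairwiseDisjoint id ∧
      ∀ t ∈ T, (t ∩ A₂).card = 2 ∧ (t ∩ C₂).card = 2 ∧ t.card = 4 ∧
        ∃ e₁ ∈ E, ∃ e₂ ∈ E, e₁ ≠ e₂ ∧ e₁ ⊆ t ∧ e₂ ⊆ t from H s le_rfl
  intro k
  induction k with
  | zero => intro _; exact ⟨∅, by simp, by simp, by simp⟩
  | succ k ih =>
    intro hk
    obtain ⟨T, hTcard, hTdisj, hTprop⟩ := ih (Nat.le_of_succ_le hk)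
    set U : Finset V := T.biUnion id with hU
    have hdisjTA : ∀ t ∈ T, ∀ t' ∈ T, t ≠ t' →
        Disjoint (t ∩ A₂) (t' ∩ A₂) := by
      intro t ht t' ht' hne
      exact (hTdisj ht ht' hne).mono inter_subset_left inter_subset_left
    have hdisjTC : ∀ t ∈ T, ∀ t' ∈ T, t ≠ t' →
        Disjoint (t ∩ C₂) (t' ∩ C₂) := by
      intro t ht t' ht' hne
      exact (hTdisj ht ht' hne).mono inter_subset_left inter_subset_left
    have hUA : (U ∩ A₂).card = 2 * k := by
      have heq : U ∩ A₂ = T.biUnion (fun t => t ∩ A₂) := by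
        ext x; simp only [hU, mem_inter, mem_biUnion, id]
        constructor
        · rintro ⟨⟨t, ht, hx⟩, hxA⟩; exact ⟨t, ht, hx, hxA⟩
        · rintro ⟨t, ht, hx, hxA⟩; exact ⟨⟨t, ht, hx⟩, hxA⟩
      rw [heq, card_biUnion hdisjTA]
      rw [Finset.sum_congr rfl (fun t ht => (hTprop t ht).1), Finset.sum_const, hTcard]
      ring
    have hUC : (U ∩ C₂).card = 2 * k := by
      have heq : U ∩ C₂ = T.biUnion (fun t => t ∩ C₂) := by
        ext x; simp only [hU, mem_inter, mem_biUnion, id]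
        constructor
        · rintro ⟨⟨t, ht, hx⟩, hxC⟩; exact ⟨t, ht, hx, hxC⟩
        · rintro ⟨t, ht, hx, hxC⟩; exact ⟨⟨t, ht, hx⟩, hxC⟩
      rw [heq, card_biUnion hdisjTC]
      rw [Finset.sum_congr rfl (fun t ht => (hTprop t ht).2.1), Finset.sum_const, hTcard]
      ring
    -- pick two fresh vertices of A₂
    have hAcard : 1 < (A₂ \ U).card := by
      have h5 : (A₂ ∩ U).card + (A₂ \ U).card = A₂.card := card_inter_add_card_sdiff A₂ U
      have h6 : (A₂ ∩ U).card = 2 * k := by rw [inter_comm]; exact hUA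
      omega
    obtain ⟨a₁, ha₁, a₂, ha₂, hane⟩ := Finset.one_lt_card.1 hAcard
    have ha₁A : a₁ ∈ A₂ := (mem_sdiff.1 ha₁).1
    have ha₂A : a₂ ∈ A₂ := (mem_sdiff.1 ha₂).1
    have ha₁U : a₁ ∉ U := (mem_sdiff.1 ha₁).2
    have ha₂U : a₂ ∉ U := (mem_sdiff.1 ha₂).2
    -- counting good pairs
    set P : Finset (Finset V) := C₂.powersetCard 2 with hP
    set B₁ : Finset (Finset V) := P.filter (fun p => insert a₁ p ∉ E) with hB₁
    set B₂ : Finset (Finset V) := P.filter (fun p => insert a₂ p ∉ E) with hB₂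
    set BU : Finset (Finset V) := P.filter (fun p => ¬ Disjoint p U) with hBU
    have hPcard : P.card = C₂.card.choose 2 := card_powersetCard 2 C₂
    have hBUcard : (BU.card : ℝ) ≤ 2 * s * C₂.card := by
      have hsub : BU ⊆ (U ∩ C₂).biUnion (fun x => P.filter (fun p => x ∈ p)) := by
        intro p hp
        obtain ⟨hpP, hnd⟩ := mem_filter.1 hp
        obtain ⟨x, hxp, hxU⟩ := Finset.not_disjoint_iff.1 hnd
        have hpC : p ⊆ C₂ := (mem_powersetCard.1 hpP).1
        exact mem_biUnion.2 ⟨x, mem_inter.2 ⟨hxU, hpC hxp⟩, mem_filter.2 ⟨hpP, hxp⟩⟩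
      have hfil : ∀ x : V, (P.filter (fun p => x ∈ p)).card ≤ C₂.card := by
        intro x
        have : (P.filter (fun p => x ∈ p)).card ≤ (C₂.powersetCard 1).card := by
          apply card_le_card_of_injOn (fun p => p.erase x)
          · intro p hp
            obtain ⟨hpP, hxp⟩ := mem_filter.1 hp
            obtain ⟨hpC, hp2⟩ := mem_powersetCard.1 hpP
            exact mem_powersetCard.2 ⟨(erase_subset x p).trans hpC,
              by rw [card_erase_of_mem hxp, hp2]⟩
          · intro p hp q hq hpq
            obtain ⟨_, hxp⟩ := mem_filter.1 hp
            obtain ⟨_, hxq⟩ := mem_filter.1 hq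
            dsimp only at hpq
            rw [← insert_erase hxp, hpq, insert_erase hxq]
        rwa [card_powersetCard, Nat.choose_one_right] at this
      have h7 : BU.card ≤ (U ∩ C₂).card * C₂.card := by
        calc BU.card ≤ ((U ∩ C₂).biUnion (fun x => P.filter (fun p => x ∈ p))).card :=
              card_le_card hsub
          _ ≤ ∑ x ∈ U ∩ C₂, (P.filter (fun p => x ∈ p)).card := card_biUnion_le
          _ ≤ ∑ _x ∈ U ∩ C₂, C₂.card := Finset.sum_le_sum (fun x _ => hfil x)
          _ = (U ∩ C₂).card * C₂.card := by rw [Finset.sum_const, smul_eq_mul]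
      have h8 : BU.card ≤ 2 * s * C₂.card := by
        rw [hUC] at h7
        calc BU.card ≤ 2 * k * C₂.card := h7
          _ ≤ 2 * s * C₂.card := by
              apply Nat.mul_le_mul_right
              omega
      exact_mod_cast h8
    set G : Finset (Finset V) := P \ (B₁ ∪ B₂ ∪ BU) with hG
    have hGne : G.Nonempty := by
      rw [← card_pos]
      have hsub : B₁ ∪ B₂ ∪ BU ⊆ P :=
        union_subset (union_subset (filter_subset _ _) (filter_subset _ _)) (filter_subset _ _)
      have heq : G.card + (B₁ ∪ B₂ ∪ BU).card = P.card := card_sdiff_add_card_eq_card hsub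
      have hule : ((B₁ ∪ B₂ ∪ BU).card : ℝ) ≤ (B₁.card : ℝ) + B₂.card + BU.card := by
        have : (B₁ ∪ B₂ ∪ BU).card ≤ B₁.card + B₂.card + BU.card :=
          (card_union_le _ _).trans (by gcongr; exact card_union_le _ _)
        exact_mod_cast this
      have hb1 := h1 a₁ ha₁A
      have hb2 := h1 a₂ ha₂A
      have hGr : (0 : ℝ) < (G.card : ℝ) := by
        have heq' : (G.card : ℝ) + (B₁ ∪ B₂ ∪ BU).card = (C₂.card.choose 2 : ℝ) := by
          exact_mod_cast heq.trans hPcard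
        rw [hB₁, hB₂] at *
        nlinarith [hb1, hb2, hBUcard, h2, h3, hule, heq']
      exact_mod_cast hGr
    obtain ⟨p, hp⟩ := hGne
    rw [hG, mem_sdiff, mem_union, mem_union] at hp
    obtain ⟨hpP, hpbad⟩ := hp
    push_neg at hpbad
    obtain ⟨⟨hpB₁, hpB₂⟩, hpBU⟩ := hpbad
    have he₁ : insert a₁ p ∈ E := by
      by_contra h; exact hpB₁ (mem_filter.2 ⟨hpP, h⟩)
    have he₂ : insert a₂ p ∈ E := by
      by_contra h; exact hpB₂ (mem_filter.2 ⟨hpP, h⟩)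
    have hpU : Disjoint p U := by
      by_contra h; exact hpBU (mem_filter.2 ⟨hpP, h⟩)
    obtain ⟨hpC, hp2⟩ := mem_powersetCard.1 hpP
    have ha₁C : a₁ ∉ C₂ := fun h => (Finset.disjoint_left.1 hdisj) ha₁A h
    have ha₂C : a₂ ∉ C₂ := fun h => (Finset.disjoint_left.1 hdisj) ha₂A h
    have ha₁p : a₁ ∉ p := fun h => ha₁C (hpC h)
    have ha₂p : a₂ ∉ p := fun h => ha₂C (hpC h)
    set t : Finset V := insert a₁ (insert a₂ p) with ht
    have ha₁t : a₁ ∉ insert a₂ p := by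
      simp only [mem_insert]; rintro (rfl | h); exact hane rfl; exact ha₁p h
    have ht4 : t.card = 4 := by
      rw [ht, card_insert_of_notMem ha₁t, card_insert_of_notMem ha₂p, hp2]
    have htA : t ∩ A₂ = {a₁, a₂} := by
      ext x
      simp only [ht, mem_inter, mem_insert, mem_singleton]
      constructor
      · rintro ⟨(rfl | rfl | hx), hxA⟩
        · exact Or.inl rfl
        · exact Or.inr rfl
        · exact absurd (hpC hx) (fun h => (Finset.disjoint_left.1 hdisj) hxA h)
      · rintro (rfl | rfl)
        · exact ⟨Or.inl rfl, ha₁A⟩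
        · exact ⟨Or.inr (Or.inl rfl), ha₂A⟩
    have htC : t ∩ C₂ = p := by
      ext x
      simp only [ht, mem_inter, mem_insert]
      constructor
      · rintro ⟨(rfl | rfl | hx), hxC⟩
        · exact absurd hxC ha₁C
        · exact absurd hxC ha₂C
        · exact hx
      · intro hx; exact ⟨Or.inr (Or.inr hx), hpC hx⟩
    have htU : Disjoint t U := by
      rw [ht, disjoint_insert_left, disjoint_insert_left]
      exact ⟨ha₁U, ha₂U, hpU⟩
    have htT : t ∉ T := by
      intro h
      have hsub : t ⊆ U := subset_biUnion_of_mem id h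
      exact ha₁U (hsub (mem_insert_self _ _))
    refine ⟨insert t T, ?_, ?_, ?_⟩
    · rw [card_insert_of_notMem htT, hTcard]
    · rw [coe_insert]
      apply hTdisj.insert
      intro t' ht' hne
      exact htU.mono_right (subset_biUnion_of_mem id ht')
    · intro t' ht'
      rcases mem_insert.1 ht' with rfl | ht'
      · refine ⟨by rw [htA]; rw [card_insert_of_notMem (by simpa using hane), card_singleton],
          by rw [htC, hp2], ht4, insert a₁ p, he₁, insert a₂ p, he₂, ?_, ?_, ?_⟩
        · intro h
          have : a₁ ∈ insert a₂ p := h ▸ mem_insert_self a₁ p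
          exact ha₁t this
        · rw [ht]
          exact insert_subset_insert _ (subset_insert _ _)
        · rw [ht]
          exact subset_insert _ _
      · exact hTprop t' ht'
end
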